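/- arXiv:1704.03434 — 4 statements merged into one kernel-verified Lean document; each statement's English description precedes it below -/
import Mathlib

section
/- The limit of the generalized continued fraction K_{n=1}^∞ (1/n)/1, i.e. the limit as N→∞ of the finite continued fraction with partial numerators b_n = 1/n and partial denominators a_n = 1, equals e - 2. -/
open Real Filter

/-- Finite continued fraction approximant of depth `N`:
`cf b a N = b 1 / (a 1 + b 2 / (a 2 + ... + b N / a N))`. -/
noncomputable def cf (b a : ℕ → ℝ) (N : ℕ) : ℝ :=
  (List.range N).foldr (fun i acc => b (i + 1) / (a (i + 1) + acc)) 0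

/-!
Write `s n = ∑_{k<n} (-1)^k / k!` for the partial sums of `e⁻¹`. The continuants of
`K (1/n)/1` obey `u (N + 2) = u (N + 1) + u N / (N + 2)`, whose solutions are exactly
`u N = (N + 1) c (N + 1) + c N` with `c = α + β s`: the choice `c = 1` gives `u N = N + 2`,
and `c = s` works because `s` changes by `(-1)^n / n!`. Matching initial values, the numerators
are the solution with `(α, β) = (1, -2)` and the denominators the one with `(α, β) = (0, 1)`.
Divided by `N + 1` they tend to `1 - 2 e⁻¹` and `e⁻¹`, so the approximants tend to `e - 2`.
The approximants are the continuant quotients because all partial numerators and denominators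
are positive (`GenContFract.convs_eq_convs'`).
-/

open Topology GenContFract

/-- Note the clash of conventions: Mathlib's `Pair.a` is the partial numerator, here `b`. -/
noncomputable def GenContFract.ofFun {K : Type*} [Zero K] (b a : ℕ → K) : GenContFract K :=
  ⟨0, Stream'.Seq.ofStream fun n => ⟨b (n + 1), a (n + 1)⟩⟩

lemma cf_succ (b a : ℕ → ℝ) (N : ℕ) :
    cf b a (N + 1) = b 1 / (a 1 + cf (fun n => b (n + 1)) (fun n => a (n + 1)) N) := by
  simp only [cf, List.range_succ_eq_map, List.foldr_cons, List.foldr_map]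

lemma cf_eq_convs' (b a : ℕ → ℝ) (N : ℕ) : cf b a N = (ofFun b a).convs' N := by
  induction N generalizing b a with
  | zero => simp [cf, convs', ofFun]
  | succ N ih =>
    rw [cf_succ, ih, convs', convs', convs'Aux_succ_some rfl]
    simp only [ofFun, zero_add]
    rfl

lemma cf_eq_convs {b a : ℕ → ℝ} (hb : ∀ n, 0 < b (n + 1)) (ha : ∀ n, 0 < a (n + 1)) (N : ℕ) :
    cf b a N = (ofFun b a).convs N := by
  rw [cf_eq_convs', convs_eq_convs']
  rintro gp m - ⟨⟩
  exact ⟨hb m, ha m⟩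

noncomputable def expNegOnePartialSum (n : ℕ) : ℝ :=
  ∑ k ∈ Finset.range n, (-1) ^ k / k.factorial

lemma expNegOnePartialSum_succ (n : ℕ) :
    expNegOnePartialSum (n + 1) = expNegOnePartialSum n + (-1) ^ n / n.factorial :=
  Finset.sum_range_succ _ _

lemma tendsto_expNegOnePartialSum : Tendsto expNegOnePartialSum atTop (𝓝 (exp (-1))) := by
  have h := NormedSpace.expSeries_div_hasSum_exp (-1 : ℝ)
  rw [← exp_eq_exp_ℝ] at h
  exact h.tendsto_sum_nat

/-- The solutions of the continuant recurrence `u (N + 2) = u (N + 1) + u N / (N + 2)`. -/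
noncomputable def invNatContinuant (α β : ℝ) (N : ℕ) : ℝ :=
  (N + 1) * (α + β * expNegOnePartialSum (N + 1)) + (α + β * expNegOnePartialSum N)

lemma invNatContinuant_add_two (α β : ℝ) (N : ℕ) :
    invNatContinuant α β (N + 2) =
      invNatContinuant α β (N + 1) + invNatContinuant α β N / (N + 2) := by
  simp only [invNatContinuant, expNegOnePartialSum_succ, Nat.factorial_succ]
  push_cast
  field_simp
  ring

lemma conts_ofFun_inv_one (N : ℕ) :
    (ofFun (fun n => 1 / (n : ℝ)) fun _ => 1).conts N =
      ⟨invNatContinuant 1 (-2) N, invNatContinuant 0 1 N⟩ := by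
  induction N using Nat.twoStepInduction with
  | zero =>
    rw [zeroth_cont_eq_h_one]
    norm_num [ofFun, invNatContinuant, expNegOnePartialSum]
  | one =>
    rw [first_cont_eq rfl]
    norm_num [Stream'.get, ofFun, invNatContinuant, expNegOnePartialSum, Finset.sum_range_succ]
  | more N hN hN1 =>
    rw [conts_recurrence rfl hN hN1, invNatContinuant_add_two, invNatContinuant_add_two]
    simp only [Stream'.get, one_mul, one_div_mul_eq_div, Nat.cast_add, Nat.cast_ofNat, add_assoc,
      one_add_one_eq_two]

lemma tendsto_invNatContinuant_div (α β : ℝ) :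
    Tendsto (fun N : ℕ => invNatContinuant α β N / (N + 1)) atTop (𝓝 (α + β * exp (-1))) := by
  have hc : Tendsto (fun n => α + β * expNegOnePartialSum n) atTop (𝓝 (α + β * exp (-1))) :=
    (tendsto_expNegOnePartialSum.const_mul β).const_add α
  have hdecay := hc.mul tendsto_one_div_add_atTop_nhds_zero_nat
  rw [mul_zero] at hdecay
  have hsum := (hc.comp (tendsto_add_atTop_nat 1)).add hdecay
  rw [add_zero] at hsum
  refine hsum.congr fun N => ?_
  simp only [invNatContinuant, Function.comp]
  field_simp

theorem cf_one_over_n :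
    Tendsto (cf (fun n => 1 / (n : ℝ)) (fun _ => 1)) atTop
      (nhds (Real.exp 1 - 2)) := by
  have hcf (N : ℕ) : cf (fun n => 1 / (n : ℝ)) (fun _ => 1) N =
      (invNatContinuant 1 (-2) N / (N + 1)) / (invNatContinuant 0 1 N / (N + 1)) := by
    rw [cf_eq_convs (fun n => by positivity) (fun _ => one_pos), conv_eq_conts_a_div_conts_b,
      conts_ofFun_inv_one, div_div_div_cancel_right₀ (by positivity)]
  have hlim : (1 + -2 * exp (-1)) / (0 + 1 * exp (-1)) = exp 1 - 2 := by
    rw [exp_neg]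
    field_simp
    ring
  rw [funext hcf, ← hlim]
  exact (tendsto_invNatContinuant_div 1 (-2)).div (tendsto_invNatContinuant_div 0 1)
    (by positivity)
end

section
/- The generalized continued fraction K_{n=1}^∞ (1/(2n))/1 (partial numerators b_n = 1/(2n), partial denominators a_n = 1) converges to √(eπ/2)·erf(1/√2) − 1. -/
/-!
Put `h N = ∫₀¹ (1 - x²)^N e^{(1 - x²)/2} dx`. Integration by parts gives `h 1 = 1` and
`h (N + 2) = (2N + 2) (h N - h (N + 1))`, so `v n = h n / h (n + 1) - 1` satisfies
`v n = (1 / (2(n + 1))) / (1 + v (n + 1))`: the `v n` are the tails of the continued fraction,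
and `v 0 = h 0 - 1` is the claimed value. Since `x ↦ b / (a + x)` is `b`-Lipschitz on `[0, ∞)`
when `a ≥ 1`, the `N`-th approximant differs from `v 0` by at most `(∏_{n ≤ N} b n) · v N`,
which is at most `∏_{n ≤ N + 1} b n = 1 / (2^(N+1) (N + 1)!)`.
-/

open Real Filter

/-- The error function `erf x = (2/√π) ∫_0^x exp (-t²) dt`. -/
noncomputable def erf (x : ℝ) : ℝ :=
  (2 / Real.sqrt Real.pi) * ∫ t in (0:ℝ)..x, Real.exp (-t ^ 2)

open Finset

noncomputable def cfTail (b a : ℕ → ℝ) (N : ℕ) (x : ℝ) : ℝ :=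
  (List.range N).foldr (fun i acc => b (i + 1) / (a (i + 1) + acc)) x

theorem cf_eq_cfTail_zero (b a : ℕ → ℝ) (N : ℕ) : cf b a N = cfTail b a N 0 := rfl

theorem cfTail_succ (b a : ℕ → ℝ) (N : ℕ) (x : ℝ) :
    cfTail b a (N + 1) x = cfTail b a N (b (N + 1) / (a (N + 1) + x)) := by
  simp only [cfTail, List.range_succ, List.foldr_append, List.foldr_cons, List.foldr_nil]

theorem abs_div_add_sub_div_add_le {a b x y : ℝ} (hb : 0 ≤ b) (ha : 1 ≤ a) (hx : 0 ≤ x)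
    (hy : 0 ≤ y) : |b / (a + x) - b / (a + y)| ≤ b * |x - y| := by
  have hax : 1 ≤ a + x := by linarith
  have hay : 1 ≤ a + y := by linarith
  have hxy : b / (a + x) - b / (a + y) = b * (y - x) / ((a + x) * (a + y)) := by
    field_simp
    ring
  rw [hxy, abs_div, abs_mul, abs_of_nonneg hb, abs_sub_comm,
    abs_of_pos (by positivity : 0 < (a + x) * (a + y))]
  exact div_le_self (by positivity) (one_le_mul_of_one_le_of_one_le hax hay)

section Tail

variable {b a : ℕ → ℝ}

theorem abs_cfTail_sub_le (hb : ∀ n, 0 ≤ b n) (ha : ∀ n, 1 ≤ a n) (N : ℕ) {x y : ℝ}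
    (hx : 0 ≤ x) (hy : 0 ≤ y) :
    |cfTail b a N x - cfTail b a N y| ≤ (∏ i ∈ range N, b (i + 1)) * |x - y| := by
  induction N generalizing x y with
  | zero => simp [cfTail]
  | succ N ih =>
    have hxN : 0 ≤ b (N + 1) / (a (N + 1) + x) := div_nonneg (hb _) (by linarith [ha (N + 1)])
    have hyN : 0 ≤ b (N + 1) / (a (N + 1) + y) := div_nonneg (hb _) (by linarith [ha (N + 1)])
    rw [cfTail_succ, cfTail_succ, prod_range_succ, mul_assoc]
    exact (ih hxN hyN).trans <| mul_le_mul_of_nonneg_left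
      (abs_div_add_sub_div_add_le (hb _) (ha _) hx hy) (prod_nonneg fun i _ => hb (i + 1))

theorem cfTail_eq_of_rec {v : ℕ → ℝ} (hrec : ∀ n, v n = b (n + 1) / (a (n + 1) + v (n + 1)))
    (N : ℕ) : cfTail b a N (v N) = v 0 := by
  induction N with
  | zero => rfl
  | succ N ih => rw [cfTail_succ, ← hrec, ih]

theorem tendsto_cf_of_rec {v : ℕ → ℝ} (hb : ∀ n, 0 ≤ b n) (ha : ∀ n, 1 ≤ a n)
    (hv : ∀ n, 0 ≤ v n) (hrec : ∀ n, v n = b (n + 1) / (a (n + 1) + v (n + 1)))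
    (hprod : Tendsto (fun N => ∏ i ∈ range N, b (i + 1)) atTop (nhds 0)) :
    Tendsto (cf b a) atTop (nhds (v 0)) := by
  have hv_le (n : ℕ) : v n ≤ b (n + 1) := by
    rw [hrec n]
    exact div_le_self (hb _) (by linarith [ha (n + 1), hv (n + 1)])
  have hdist (N : ℕ) : |cf b a N - v 0| ≤ ∏ i ∈ range (N + 1), b (i + 1) :=
    calc |cf b a N - v 0| = |cfTail b a N 0 - cfTail b a N (v N)| := by
          rw [cfTail_eq_of_rec hrec, cf_eq_cfTail_zero]
      _ ≤ (∏ i ∈ range N, b (i + 1)) * |0 - v N| := abs_cfTail_sub_le hb ha N le_rfl (hv N)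
      _ ≤ ∏ i ∈ range (N + 1), b (i + 1) := by
          rw [zero_sub, abs_neg, abs_of_nonneg (hv N), prod_range_succ]
          exact mul_le_mul_of_nonneg_left (hv_le N) (prod_nonneg fun i _ => hb (i + 1))
  rw [tendsto_iff_norm_sub_tendsto_zero]
  exact squeeze_zero (fun _ => norm_nonneg _) hdist (hprod.comp (tendsto_add_atTop_nat 1))

end Tail

noncomputable def tailIntegrand (N : ℕ) (x : ℝ) : ℝ := (1 - x ^ 2) ^ N * exp ((1 - x ^ 2) / 2)

noncomputable def tailIntegral (N : ℕ) : ℝ := ∫ x in (0 : ℝ)..1, tailIntegrand N x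

theorem continuous_tailIntegrand (N : ℕ) : Continuous (tailIntegrand N) := by
  unfold tailIntegrand
  fun_prop

theorem intervalIntegrable_tailIntegrand (N : ℕ) :
    IntervalIntegrable (tailIntegrand N) MeasureTheory.volume 0 1 :=
  (continuous_tailIntegrand N).intervalIntegrable 0 1

theorem tailIntegral_pos (N : ℕ) : 0 < tailIntegral N := by
  refine intervalIntegral.intervalIntegral_pos_of_pos_on (intervalIntegrable_tailIntegrand N)
    (fun x hx => ?_) one_pos
  have : 0 < 1 - x ^ 2 := by nlinarith [hx.1, hx.2]
  unfold tailIntegrand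
  positivity

theorem hasDerivAt_one_sub_sq (x : ℝ) : HasDerivAt (fun y : ℝ => 1 - y ^ 2) (-(2 * x)) x := by
  simpa using (hasDerivAt_pow 2 x).const_sub 1

theorem hasDerivAt_mul_tailIntegrand_zero (x : ℝ) :
    HasDerivAt (fun y => y * tailIntegrand 0 y) (tailIntegrand 1 x) x := by
  have hp := (hasDerivAt_one_sub_sq x).fun_pow 0
  have he := ((hasDerivAt_one_sub_sq x).div_const 2).exp
  refine ((hasDerivAt_id' x).fun_mul (hp.fun_mul he)).congr_deriv ?_
  simp only [tailIntegrand, Nat.cast_zero, zero_mul]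
  ring

theorem hasDerivAt_mul_tailIntegrand_succ (N : ℕ) (x : ℝ) :
    HasDerivAt (fun y => y * tailIntegrand (N + 1) y)
      (tailIntegrand (N + 2) x - (2 * N + 2) * (tailIntegrand N x - tailIntegrand (N + 1) x))
      x := by
  have hp := (hasDerivAt_one_sub_sq x).fun_pow (N + 1)
  have he := ((hasDerivAt_one_sub_sq x).div_const 2).exp
  refine ((hasDerivAt_id' x).fun_mul (hp.fun_mul he)).congr_deriv ?_
  simp only [tailIntegrand, Nat.add_sub_cancel]
  push_cast
  ring

theorem tailIntegral_one : tailIntegral 1 = 1 := by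
  rw [tailIntegral, intervalIntegral.integral_eq_sub_of_hasDerivAt
    (fun x _ => hasDerivAt_mul_tailIntegrand_zero x) (intervalIntegrable_tailIntegrand 1)]
  norm_num [tailIntegrand]

theorem tailIntegral_add_two (N : ℕ) :
    tailIntegral (N + 2) = (2 * N + 2) * (tailIntegral N - tailIntegral (N + 1)) := by
  have hI := intervalIntegrable_tailIntegrand
  have hF := intervalIntegral.integral_eq_sub_of_hasDerivAt
    (fun x _ => hasDerivAt_mul_tailIntegrand_succ N x)
    ((hI (N + 2)).sub (((hI N).sub (hI (N + 1))).const_mul _))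
  rw [intervalIntegral.integral_sub (hI _) (((hI N).sub (hI (N + 1))).const_mul _),
    intervalIntegral.integral_const_mul, intervalIntegral.integral_sub (hI _) (hI _)] at hF
  have hF1 : tailIntegrand (N + 1) 1 = 0 := by simp [tailIntegrand]
  simp only [hF1, mul_zero, zero_mul, sub_zero] at hF
  unfold tailIntegral
  linarith

theorem tailIntegral_zero :
    tailIntegral 0 = Real.sqrt (Real.exp 1 * Real.pi / 2) * erf (1 / Real.sqrt 2) := by
  have hs : Real.sqrt 2 ≠ 0 := by positivity
  have hsq : Real.sqrt 2 ^ 2 = 2 := Real.sq_sqrt (by norm_num)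
  have hsubst : (∫ x in (0 : ℝ)..1, exp (-(x / Real.sqrt 2) ^ 2))
      = Real.sqrt 2 * ∫ t in (0 : ℝ)..(1 / Real.sqrt 2), exp (-t ^ 2) := by
    rw [intervalIntegral.integral_comp_div (fun t => exp (-t ^ 2)) hs, zero_div, smul_eq_mul]
  have hconst : Real.sqrt (Real.exp 1 * Real.pi / 2) * (2 / Real.sqrt Real.pi)
      = exp (1 / 2) * Real.sqrt 2 := by
    have hpi : Real.sqrt Real.pi ≠ 0 := by positivity
    rw [Real.sqrt_div' _ (by norm_num : (0:ℝ) ≤ 2), Real.sqrt_mul (exp_pos 1).le, ← exp_half]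
    field_simp
    rw [hsq]
  calc tailIntegral 0 = exp (1 / 2) * ∫ x in (0 : ℝ)..1, exp (-(x / Real.sqrt 2) ^ 2) := by
        rw [tailIntegral, ← intervalIntegral.integral_const_mul]
        congr 1
        ext x
        rw [tailIntegrand, pow_zero, one_mul, ← exp_add, div_pow, hsq]
        ring_nf
    _ = _ := by rw [hsubst, erf, ← mul_assoc, ← mul_assoc, hconst]

theorem tailIntegral_succ_lt (n : ℕ) : tailIntegral (n + 1) < tailIntegral n := by
  nlinarith [tailIntegral_add_two n, tailIntegral_pos (n + 2)]

noncomputable def tailRatio (n : ℕ) : ℝ := tailIntegral n / tailIntegral (n + 1) - 1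

theorem tailRatio_nonneg (n : ℕ) : 0 ≤ tailRatio n := by
  rw [tailRatio, sub_nonneg, one_le_div (tailIntegral_pos _)]
  exact (tailIntegral_succ_lt n).le

theorem tailRatio_eq (n : ℕ) :
    tailRatio n = 1 / (2 * ((n + 1 : ℕ) : ℝ)) / (1 + tailRatio (n + 1)) := by
  have h1 := (tailIntegral_pos (n + 1)).ne'
  have h2 := (tailIntegral_pos (n + 2)).ne'
  rw [tailRatio, tailRatio, add_sub_cancel, div_div_eq_mul_div, tailIntegral_add_two n]
  push_cast
  field_simp

theorem tendsto_prod_one_div_two_mul :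
    Tendsto (fun N => ∏ i ∈ range N, 1 / (2 * ((i + 1 : ℕ) : ℝ))) atTop (nhds 0) := by
  have hle (N : ℕ) : ∏ i ∈ range N, 1 / (2 * ((i + 1 : ℕ) : ℝ)) ≤ (1 / 2) ^ N :=
    calc ∏ i ∈ range N, 1 / (2 * ((i + 1 : ℕ) : ℝ)) ≤ ∏ _i ∈ range N, (1 / 2 : ℝ) :=
          prod_le_prod (fun _ _ => by positivity) fun i _ =>
            one_div_le_one_div_of_le two_pos (by push_cast; linarith [i.cast_nonneg (α := ℝ)])
      _ = (1 / 2) ^ N := by rw [prod_const, card_range]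
  exact squeeze_zero (fun _ => prod_nonneg fun _ _ => by positivity) hle
    (tendsto_pow_atTop_nhds_zero_of_lt_one (by norm_num) (by norm_num))

theorem cf_one_over_two_n :
    Tendsto (cf (fun n => 1 / (2 * (n : ℝ))) (fun _ => 1)) atTop
      (nhds (Real.sqrt (Real.exp 1 * Real.pi / 2) * erf (1 / Real.sqrt 2) - 1)) := by
  have hlim : Real.sqrt (Real.exp 1 * Real.pi / 2) * erf (1 / Real.sqrt 2) - 1 = tailRatio 0 := by
    rw [tailRatio, ← tailIntegral_zero, tailIntegral_one, div_one]
  rw [hlim]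
  exact tendsto_cf_of_rec (fun _ => by positivity) (fun _ => le_rfl) tailRatio_nonneg tailRatio_eq
    tendsto_prod_one_div_two_mul
end

section
/- For real x > 1, ((x−1)/(2x−1))·((x/(x−1))^{2x−1} − 1) = 2 + K_{n=1}^∞ b_n/a_n, where b_n = (n+1)(2x−n−2)/x and a_n = (n+1)(x+1)/x. -/
/-!
The approximants are `A_N / B_N`, where `A` and `B` solve the three-term recurrence
`u (n + 2) = a (n + 2) * u (n + 1) + b (n + 2) * u n`. After division by `(n + 1)!` this
recurrence has two explicit solutions: the Taylor coefficients `S n` of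
`(1 - t / x) ^ (2x - 1) / (1 - t) ^ 3` and a quadratic polynomial `P n`. So `B_N = (N + 1)! S N`
and `A_N` is `(N + 1)!` times a combination of `S N` and `P N`. The pole of order three at `t = 1`
dominates: `S N ~ (1 - 1/x) ^ (2x - 1) N² / 2` by dominated convergence applied to the binomial
series, while `P N ~ (x - 1) N²`, and the limit of `A_N / B_N` follows. The denominator at depth
`n` stays above `n + 2 - 1/x > 0`, so `cf` never divides by zero.
-/

open Real Filter

noncomputable def cfWithTail (b a : ℕ → ℝ) (N : ℕ) (t : ℝ) : ℝ :=
  (List.range N).foldr (fun i acc => b (i + 1) / (a (i + 1) + acc)) t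

theorem cfWithTail_succ (b a : ℕ → ℝ) (N : ℕ) (t : ℝ) :
    cfWithTail b a (N + 1) t = cfWithTail b a N (b (N + 1) / (a (N + 1) + t)) := by
  simp [cfWithTail, List.range_succ, List.foldr_append]

def IsContinuantSolution (b a p : ℕ → ℝ) : Prop :=
  ∀ n, p (n + 2) = a (n + 2) * p (n + 1) + b (n + 2) * p n

theorem min_zero_div_le_div {β δ s : ℝ} (hδ : 0 < δ) (hs : δ ≤ s) :
    min 0 (β / δ) ≤ β / s := by
  rcases le_or_gt 0 β with hβ | hβ
  · exact (min_le_left _ _).trans (div_nonneg hβ (hδ.le.trans hs))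
  · exact (min_le_right _ _).trans (by
      simpa only [div_eq_mul_inv] using mul_le_mul_of_nonpos_left (inv_anti₀ hδ hs) hβ.le)

section Convergents

variable {b a p q d : ℕ → ℝ}

-- `d n` bounds the denominator `a (n + 1) + tail` at depth `n` from below; it keeps every
-- denominator nonzero, so the junk value of `_ / 0` never enters.
theorem cfWithTail_eq_div (hp : IsContinuantSolution b a p) (hq : IsContinuantSolution b a q)
    (hp0 : p 0 = 0) (hp1 : p 1 = b 1) (hq0 : q 0 = 1) (hq1 : q 1 = a 1)
    (hd_pos : ∀ n, 0 < d n) (hd : ∀ n, d n ≤ a (n + 1) + min 0 (b (n + 2) / d (n + 1)))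
    (N : ℕ) {t : ℝ} (ht : d N ≤ a (N + 1) + t) :
    cfWithTail b a (N + 1) t = (p (N + 1) + p N * t) / (q (N + 1) + q N * t) := by
  induction N generalizing t with
  | zero => simp [cfWithTail, hp0, hp1, hq0, hq1]
  | succ N ih =>
    have hden : 0 < a (N + 2) + t := (hd_pos (N + 1)).trans_le ht
    have hs : d N ≤ a (N + 1) + b (N + 2) / (a (N + 2) + t) :=
      (hd N).trans (by gcongr; exact min_zero_div_le_div (hd_pos (N + 1)) ht)
    rw [cfWithTail_succ, ih hs, hp N, hq N]
    field_simp
    ring_nf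

theorem cf_succ_eq_div (hp : IsContinuantSolution b a p) (hq : IsContinuantSolution b a q)
    (hp0 : p 0 = 0) (hp1 : p 1 = b 1) (hq0 : q 0 = 1) (hq1 : q 1 = a 1)
    (hd_pos : ∀ n, 0 < d n) (hd : ∀ n, d n ≤ a (n + 1) + min 0 (b (n + 2) / d (n + 1)))
    (N : ℕ) : cf b a (N + 1) = p (N + 1) / q (N + 1) := by
  have h0 : d N ≤ a (N + 1) + 0 := (hd N).trans (by gcongr; exact min_le_left _ _)
  show cfWithTail b a (N + 1) 0 = _
  simpa using cfWithTail_eq_div hp hq hp0 hp1 hq0 hq1 hd_pos hd N h0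

end Convergents

theorem Ring.choose_succ_mul {K : Type*} [Field K] [CharZero K] (a : K) (k : ℕ) :
    Ring.choose a (k + 1) * (k + 1) = Ring.choose a k * (a - k) := by
  rw [Ring.choose_eq_smul, Ring.choose_eq_smul, descPochhammer_succ_right]
  simp [Polynomial.smeval_mul, Nat.factorial_succ, Polynomial.smeval_natCast]
  field_simp

theorem Real.hasSum_choose_mul_pow (a : ℝ) {y : ℝ} (hy : |y| < 1) :
    HasSum (fun n => Ring.choose a n * y ^ n) ((1 + y) ^ a) := by
  have h := (Real.one_add_rpow_hasFPowerSeriesOnBall_zero (a := a)).hasSum (y := y)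
    (by simpa [enorm_eq_nnnorm, ← NNReal.coe_lt_coe] using hy)
  simpa [binomialSeries, mul_comm] using h

theorem Real.summable_abs_choose_mul_pow (a : ℝ) {y : ℝ} (hy : |y| < 1) :
    Summable fun n => |Ring.choose a n * y ^ n| := by
  have h := (binomialSeries ℝ a).summable_norm_apply (x := y)
    (lt_of_lt_of_le (by simpa [enorm_eq_nnnorm, ← NNReal.coe_lt_coe] using hy)
      binomialSeries_radius_ge_one)
  simpa [binomialSeries, mul_comm, abs_mul] using h

namespace SelfPowerCF

open Finset

variable {x : ℝ}

noncomputable def partNum (x : ℝ) (n : ℕ) : ℝ := ((n : ℝ) + 1) * (2 * x - n - 2) / x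

noncomputable def partDen (x : ℝ) (n : ℕ) : ℝ := ((n : ℝ) + 1) * (x + 1) / x

/-- Taylor coefficients of `(1 - t / x) ^ (2x - 1)`. -/
noncomputable def binom (x : ℝ) (k : ℕ) : ℝ := Ring.choose (2 * x - 1) k * (-x⁻¹) ^ k

/-- Taylor coefficients of `1 / (1 - t) ^ 3`; taken on `ℝ` because `tri (-1) = tri (-2) = 0`
lets the sums defining `S` be extended past `k = n`. -/
noncomputable def tri (j : ℝ) : ℝ := (j + 1) * (j + 2) / 2

noncomputable def S (x : ℝ) (n : ℕ) : ℝ := ∑ k ∈ range (n + 1), binom x k * tri (n - k)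

def P (x : ℝ) (n : ℕ) : ℝ := (n + 2) * ((x - 1) * n + 5 * x - 3)

theorem binom_succ_mul (hx : x ≠ 0) (k : ℕ) :
    x * (binom x (k + 1) * (k + 1)) = binom x k * (k + 1 - 2 * x) := by
  have h := Ring.choose_succ_mul (2 * x - 1) k
  rw [binom, binom, pow_succ]
  linear_combination (-(-x⁻¹) ^ k * x * x⁻¹) * h + Ring.choose (2 * x - 1) k * (-x⁻¹) ^ k *
    (k + 1 - 2 * x) * mul_inv_cancel₀ hx

theorem S_eq_sum_range (n m : ℕ) (hnm : n ≤ m) (hm : m ≤ n + 2) :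
    S x n = ∑ k ∈ range (m + 1), binom x k * tri (n - k) := by
  induction m, hnm using Nat.le_induction with
  | base => rfl
  | succ m hnm ih =>
    rw [ih (by omega), sum_range_succ _ (m + 1)]
    obtain rfl | rfl : m = n ∨ m = n + 1 := by omega
    all_goals simp only [tri]; push_cast; ring

theorem S_rec (hx : x ≠ 0) (n : ℕ) :
    x * (n + 2) * S x (n + 2) = (n + 2) * (x + 1) * S x (n + 1) + (2 * x - n - 4) * S x n := by
  -- the recurrence holds termwise up to a telescoping difference
  let E : ℕ → ℝ := fun k => binom x k * (x * k * (n + 3 - k))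
  have hterm : ∀ k : ℕ, x * (n + 2) * (binom x k * tri ((n + 2 : ℕ) - k))
      - ((n + 2) * (x + 1) * (binom x k * tri ((n + 1 : ℕ) - k))
        + (2 * x - n - 4) * (binom x k * tri (n - k))) = E k - E (k + 1) := by
    intro k
    simp only [E, tri]
    push_cast
    linear_combination ((n : ℝ) + 2 - k) * binom_succ_mul hx k
  have hE : E 0 - E (n + 3) = 0 := by simp only [E]; push_cast; ring
  rw [S_eq_sum_range (n + 2) (n + 2) le_rfl (by omega),
    S_eq_sum_range (n + 1) (n + 2) (by omega) (by omega),
    S_eq_sum_range n (n + 2) (by omega) le_rfl, ← sub_eq_zero, ← hE, ← sum_range_sub',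
    mul_sum, mul_sum, mul_sum, ← sum_add_distrib, ← sum_sub_distrib]
  exact sum_congr rfl fun k _ => hterm k

theorem P_rec (n : ℕ) :
    x * (n + 2) * P x (n + 2) = (n + 2) * (x + 1) * P x (n + 1) + (2 * x - n - 4) * P x n := by
  simp only [P]; push_cast; ring

theorem S_zero : S x 0 = 1 := by simp [S, binom, tri]

theorem S_one (hx : x ≠ 0) : S x 1 = (x + 1) / x := by
  simp [S, binom, tri, sum_range_succ]
  field_simp
  ring

theorem isContinuantSolution_factorial_mul (hx : x ≠ 0) {u : ℕ → ℝ}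
    (hu : ∀ n : ℕ,
      x * (n + 2) * u (n + 2) = (n + 2) * (x + 1) * u (n + 1) + (2 * x - n - 4) * u n) :
    IsContinuantSolution (partNum x) (partDen x) (fun n => ((n + 1).factorial : ℝ) * u n) := by
  intro n
  simp only [partNum, partDen, Nat.factorial_succ]
  push_cast
  field_simp
  linear_combination hu n

theorem le_partDen_add_min (hx : 1 < x) (n : ℕ) :
    (n : ℝ) + 2 - x⁻¹ ≤
      partDen x (n + 1) + min 0 (partNum x (n + 2) / (((n + 1 : ℕ) : ℝ) + 2 - x⁻¹)) := by
  have hx0 : 0 < x := by linarith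
  have hd : 0 < ((n : ℝ) + 3) * x - 1 := by nlinarith
  have hsub : (n : ℝ) + 2 - x⁻¹ - partDen x (n + 1) = -(((n : ℝ) + 3) / x) := by
    simp only [partDen]; push_cast; field_simp; ring
  have hratio : partNum x (n + 2) / (((n + 1 : ℕ) : ℝ) + 2 - x⁻¹) =
      ((n : ℝ) + 3) * (2 * x - n - 4) / (((n : ℝ) + 3) * x - 1) := by
    have e : ((n + 1 : ℕ) : ℝ) + 2 - x⁻¹ = (((n : ℝ) + 3) * x - 1) / x := by
      push_cast; field_simp; ring
    rw [e, partNum, div_div_div_cancel_right₀ hx0.ne']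
    push_cast; ring
  rw [← sub_le_iff_le_add', hsub, hratio]
  refine le_min (by simp only [neg_nonpos]; positivity) ?_
  rw [neg_le_iff_add_nonneg', div_add_div _ _ hx0.ne' hd.ne']
  apply div_nonneg _ (by positivity)
  nlinarith

theorem cf_succ_eq (hx : 1 < x) (N : ℕ) :
    cf (partNum x) (partDen x) (N + 1) =
      (P x (N + 1) - 2 * (5 * x - 3) * S x (N + 1)) / (2 * (2 * x - 1) * S x (N + 1)) := by
  have hx0 : x ≠ 0 := by positivity
  have hp := isContinuantSolution_factorial_mul hx0
    (u := fun n => (P x n - 2 * (5 * x - 3) * S x n) / (2 * (2 * x - 1))) fun n => by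
      linear_combination (P_rec n - 2 * (5 * x - 3) * S_rec hx0 n) / (2 * (2 * x - 1))
  have hq := isContinuantSolution_factorial_mul hx0 (S_rec hx0)
  rw [cf_succ_eq_div hp hq (d := fun n : ℕ => (n : ℝ) + 2 - x⁻¹) _ _ _ _ _
    (le_partDen_add_min hx), mul_div_mul_left _ _ (by positivity), div_div]
  · simp [S_zero, P]
  · have h2x : 2 * x - 1 ≠ 0 := by linarith
    rw [S_one hx0]
    simp [P, partNum, Nat.factorial]
    field_simp
    ring
  · simp [S_zero]
  · rw [S_one hx0]
    simp [partDen, Nat.factorial]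
    ring
  · intro n
    have := inv_lt_one_of_one_lt₀ hx
    linarith [n.cast_nonneg (α := ℝ)]

theorem tri_pos (n : ℕ) : 0 < tri n := by unfold tri; positivity

theorem tendsto_tri_sub_div_tri (k : ℕ) :
    Tendsto (fun n : ℕ => tri (n - k) / tri n) atTop (nhds 1) := by
  have h1 : Tendsto (fun n : ℕ => 1 / ((n : ℝ) + 1)) atTop (nhds 0) :=
    tendsto_one_div_add_atTop_nhds_zero_nat
  have h2 : Tendsto (fun n : ℕ => 1 / ((n : ℝ) + 2)) atTop (nhds 0) := by
    refine (h1.comp (tendsto_add_atTop_nat 1)).congr fun n => ?_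
    simp only [Function.comp, Nat.cast_add, Nat.cast_one]
    ring_nf
  have h := ((h1.const_mul (k : ℝ)).const_sub 1).mul ((h2.const_mul (k : ℝ)).const_sub 1)
  simp only [mul_zero, sub_zero, mul_one] at h
  refine h.congr fun n => ?_
  have := (tri_pos n).ne'
  simp only [tri] at this ⊢
  field_simp
  ring

theorem tri_sub_div_tri_mem_Icc {n k : ℕ} (hk : k ≤ n) :
    tri (n - k) / tri n ∈ Set.Icc 0 1 := by
  have hkn : (k : ℝ) ≤ n := by exact_mod_cast hk
  have hk0 : (0 : ℝ) ≤ k := k.cast_nonneg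
  constructor
  · exact div_nonneg (by unfold tri; nlinarith) (tri_pos n).le
  · rw [div_le_one (tri_pos n)]
    unfold tri
    nlinarith

theorem abs_neg_inv_lt_one (hx : 1 < x) : |-x⁻¹| < 1 := by
  rw [abs_neg, abs_inv, abs_of_pos (by linarith)]
  exact inv_lt_one_of_one_lt₀ hx

theorem tendsto_S_div_tri (hx : 1 < x) :
    Tendsto (fun n => S x n / tri n) atTop (nhds (((x - 1) / x) ^ (2 * x - 1))) := by
  have hsum := Real.hasSum_choose_mul_pow (2 * x - 1) (abs_neg_inv_lt_one hx)
  rw [show 1 + -x⁻¹ = (x - 1) / x by field_simp; ring] at hsum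
  let F : ℕ → ℕ → ℝ := fun n k => if k ≤ n then binom x k * (tri (n - k) / tri n) else 0
  have hF : ∀ n, S x n / tri n = ∑' k, F n k := by
    intro n
    rw [tsum_eq_sum (s := range (n + 1)) fun k hk => if_neg (by simpa using hk), S, sum_div]
    refine sum_congr rfl fun k hk => ?_
    rw [if_pos (by simpa [Nat.lt_succ_iff] using hk)]
    ring
  have hlim : ∀ k, Tendsto (F · k) atTop (nhds (binom x k)) := by
    intro k
    have h := (tendsto_tri_sub_div_tri k).const_mul (binom x k)
    rw [mul_one] at h
    refine h.congr' ((eventually_ge_atTop k).mono fun n hn => ?_)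
    simp only [F, if_pos hn]
  have hbound : ∀ n k, ‖F n k‖ ≤ |binom x k| := by
    intro n k
    simp only [F]
    split_ifs with hk
    · obtain ⟨h0, h1⟩ := tri_sub_div_tri_mem_Icc hk
      rw [Real.norm_eq_abs, abs_mul, abs_of_nonneg h0]
      exact mul_le_of_le_one_right (abs_nonneg _) h1
    · simp
  rw [← hsum.tsum_eq]
  exact (tendsto_tsum_of_dominated_convergence
    (Real.summable_abs_choose_mul_pow (2 * x - 1) (abs_neg_inv_lt_one hx)) hlim
    (Eventually.of_forall hbound)).congr fun n => (hF n).symm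

theorem tendsto_P_div_tri : Tendsto (fun n => P x n / tri n) atTop (nhds (2 * (x - 1))) := by
  have h := (tendsto_one_div_add_atTop_nhds_zero_nat.const_mul (4 * (2 * x - 1))).const_add
    (2 * (x - 1))
  rw [mul_zero, add_zero] at h
  refine h.congr fun n => ?_
  have := (tri_pos n).ne'
  simp only [P, tri] at this ⊢
  field_simp
  ring

theorem sub_one_div_self_rpow_pos (hx : 1 < x) : 0 < ((x - 1) / x) ^ (2 * x - 1) :=
  Real.rpow_pos_of_pos (div_pos (by linarith) (by linarith)) _

theorem tendsto_cf (hx : 1 < x) :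
    Tendsto (fun N => cf (partNum x) (partDen x) (N + 1)) atTop
      (nhds ((2 * (x - 1) - 2 * (5 * x - 3) * ((x - 1) / x) ^ (2 * x - 1)) /
        (2 * (2 * x - 1) * ((x - 1) / x) ^ (2 * x - 1)))) := by
  have hG := sub_one_div_self_rpow_pos hx
  have hS := (tendsto_S_div_tri hx).comp (tendsto_add_atTop_nat 1)
  have hP := (tendsto_P_div_tri (x := x)).comp (tendsto_add_atTop_nat 1)
  refine ((hP.sub (hS.const_mul _)).div (hS.const_mul _) (by nlinarith)).congr fun N => ?_
  have := (tri_pos (N + 1)).ne'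
  rw [cf_succ_eq hx]
  simp only [Function.comp_apply, Pi.div_apply]
  field_simp

end SelfPowerCF

open SelfPowerCF in
theorem cf_self_power_variant (x : ℝ) (hx : 1 < x) :
    Tendsto
      (cf (fun n => ((n : ℝ) + 1) * (2 * x - n - 2) / x)
          (fun n => ((n : ℝ) + 1) * (x + 1) / x)) atTop
      (nhds ((x - 1) / (2 * x - 1) * ((x / (x - 1)) ^ (2 * x - 1) - 1) - 2)) := by
  change Tendsto (cf (partNum x) (partDen x)) atTop _
  rw [← tendsto_add_atTop_iff_nat 1]
  convert tendsto_cf hx using 2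
  have hG := sub_one_div_self_rpow_pos hx
  rw [← inv_div (x - 1) x, Real.inv_rpow (div_pos (by linarith) (by linarith)).le]
  generalize ((x - 1) / x) ^ (2 * x - 1) = G at hG ⊢
  have h2x : 2 * x - 1 ≠ 0 := by linarith
  rw [div_mul_eq_mul_div, div_sub' h2x, div_eq_div_iff h2x (by positivity)]
  field_simp
  ring
end

section
/- For α = 2, the series ∑_{n=1}^∞ 1/∏_{k=0}^n (2k + 1) = ∑_{n=1}^∞ 1/(2n+1)!! equals √(eπ/2)·erf(1/√2) − 1. -/
open Real MeasureTheory intervalIntegral Finset Nat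

theorem integral_one_sub_sq_pow (n : ℕ) :
    ∫ u in (0:ℝ)..1, (1 - u ^ 2) ^ n = ∏ i ∈ range n, (2 * (i : ℝ) + 2) / (2 * i + 3) := by
  have h := integral_sin_pow_mul_cos_pow_odd (a := 0) (b := π / 2) 0 n
  simp only [pow_zero, one_mul, sin_zero, sin_pi_div_two] at h
  rw [← h, EulerSine.integral_cos_pow_eq, integral_sin_pow_odd]
  ring

theorem prod_range_even_div_odd_eq (n : ℕ) :
    ∏ i ∈ range n, (2 * (i : ℝ) + 2) / (2 * i + 3) =
      2 ^ n * n ! / ∏ k ∈ range (n + 1), (2 * (k : ℝ) + 1) := by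
  induction n with
  | zero => simp
  | succ n ih =>
    rw [prod_range_succ, ih, prod_range_succ _ (n + 1)]
    have : ∏ k ∈ range (n + 1), (2 * (k : ℝ) + 1) ≠ 0 :=
      prod_ne_zero_iff.mpr fun k _ => by positivity
    push_cast [factorial_succ]
    field_simp
    ring

theorem one_div_prod_odd_eq_integral (n : ℕ) :
    1 / ∏ k ∈ range (n + 1), (2 * (k : ℝ) + 1) =
      ∫ u in (0:ℝ)..1, ((1 - u ^ 2) / 2) ^ n / n ! := by
  simp_rw [div_pow, div_div]
  rw [intervalIntegral.integral_div, integral_one_sub_sq_pow, prod_range_even_div_odd_eq]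
  field_simp

theorem hasSum_integral_pow_div_factorial {α : Type*} [MeasurableSpace α] {μ : Measure α}
    [IsFiniteMeasure μ] {f : α → ℝ} (hf : AEStronglyMeasurable f μ) {C : ℝ}
    (hC : ∀ᵐ x ∂μ, |f x| ≤ C) :
    HasSum (fun n => ∫ x, f x ^ n / (n ! : ℝ) ∂μ) (∫ x, exp (f x) ∂μ) := by
  have hbound (n : ℕ) : ∀ᵐ x ∂μ, ‖f x ^ n / (n ! : ℝ)‖ ≤ C ^ n / (n ! : ℝ) := by
    filter_upwards [hC] with x hx
    rw [norm_div, norm_pow, Real.norm_natCast]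
    gcongr
    exact hx
  have hint (n : ℕ) : Integrable (fun x => f x ^ n / (n ! : ℝ)) μ :=
    .of_bound (by fun_prop) _ (hbound n)
  have hsum : Summable fun n => ∫ x, ‖f x ^ n / (n ! : ℝ)‖ ∂μ := by
    refine .of_nonneg_of_le (fun n => integral_nonneg fun x => norm_nonneg _) (fun n => ?_)
      ((summable_pow_div_factorial C).mul_right (μ.real Set.univ))
    calc ∫ x, ‖f x ^ n / (n ! : ℝ)‖ ∂μ = ‖∫ x, ‖f x ^ n / (n ! : ℝ)‖ ∂μ‖ :=
          (norm_of_nonneg (integral_nonneg fun _ => norm_nonneg _)).symm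
      _ ≤ C ^ n / n ! * μ.real Set.univ :=
          MeasureTheory.norm_integral_le_of_norm_le_const (by simpa only [norm_norm] using hbound n)
  simpa [← integral_tsum_of_summable_integral_norm hint hsum, exp_eq_exp_ℝ,
    NormedSpace.exp_eq_tsum_div] using hasSum_integral_of_summable_integral_norm hint hsum

theorem integral_exp_neg_sq_div_two (x : ℝ) :
    ∫ u in (0:ℝ)..x, exp (-u ^ 2 / 2) = √(π / 2) * erf (x / √2) := by
  have h2 : √2 ≠ 0 := by positivity
  have hsq : √2 ^ 2 = 2 := sq_sqrt zero_le_two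
  have hsub := integral_comp_div (a := 0) (b := x) (fun t => exp (-t ^ 2)) h2
  simp only [div_pow, hsq, zero_div, smul_eq_mul] at hsub
  simp_rw [neg_div]
  rw [erf, hsub, sqrt_div' _ zero_le_two]
  have : √π ≠ 0 := by positivity
  field_simp
  rw [hsq]
  ring

theorem integral_exp_one_sub_sq_div_two :
    ∫ u in (0:ℝ)..1, exp ((1 - u ^ 2) / 2) = √(exp 1 * π / 2) * erf (1 / √2) := by
  have hsplit (u : ℝ) : exp ((1 - u ^ 2) / 2) = exp (1 / 2) * exp (-u ^ 2 / 2) := by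
    rw [← exp_add]
    ring_nf
  simp_rw [hsplit]
  rw [intervalIntegral.integral_const_mul, integral_exp_neg_sq_div_two, exp_half, mul_div_assoc,
    sqrt_mul (exp_pos 1).le, mul_assoc]

theorem sum_inv_double_factorial :
    ∑' n : ℕ, (1 : ℝ) / ∏ k ∈ Finset.range (n + 2), (2 * (k : ℝ) + 1) =
      Real.sqrt (Real.exp 1 * Real.pi / 2) * erf (1 / Real.sqrt 2) - 1 := by
  have hbound : ∀ᵐ u ∂volume.restrict (Set.Ioc (0:ℝ) 1), |(1 - u ^ 2) / 2| ≤ 1 :=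
    ae_restrict_of_forall_mem measurableSet_Ioc fun u hu =>
      abs_le.mpr ⟨by nlinarith [hu.1, hu.2], by nlinarith [hu.1]⟩
  have hS : HasSum (fun n => 1 / ∏ k ∈ range (n + 1), (2 * (k : ℝ) + 1))
      (√(exp 1 * π / 2) * erf (1 / √2)) := by
    simpa only [one_div_prod_odd_eq_integral, ← integral_exp_one_sub_sq_div_two,
      integral_of_le zero_le_one] using hasSum_integral_pow_div_factorial (by fun_prop) hbound
  simpa using ((hasSum_nat_add_iff' 1).mpr hS).tsum_eq
end
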